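/- The function K(x,y) = (2e^{x+y} − 1)/(4e^{x+y} − 3e^x − 3e^y + 2) is strictly positive for all x, y > 0, tends to +∞ as (x,y) → (0,0), and is bounded below by a positive constant on the domain {x, y > 0, (e^x−1)(e^y−1) < 4}. -/
import Mathlib


open Real

noncomputable def Kdb (x y : ℝ) : ℝ :=
  (2 * exp (x + y) - 1) / (4 * exp (x + y) - 3 * exp x - 3 * exp y + 2)

lemma Kdb_den_pos {x y : ℝ} (hx : 0 < x) (hy : 0 < y) :
    0 < 4 * exp (x + y) - 3 * exp x - 3 * exp y + 2 := by
  have h1 : 1 < exp x := by simpa using Real.exp_lt_exp.mpr hx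
  have h2 : 1 < exp y := by simpa using Real.exp_lt_exp.mpr hy
  have h3 : exp (x + y) = exp x * exp y := Real.exp_add x y
  nlinarith [mul_pos (sub_pos.mpr h1) (sub_pos.mpr h2)]

theorem dumbbell_pressure_curvature :
    (∀ x y : ℝ, 0 < x → 0 < y → 0 < Kdb x y) ∧
    Filter.Tendsto (fun p : ℝ × ℝ => Kdb p.1 p.2)
      (nhdsWithin (0, 0) {p : ℝ × ℝ | 0 < p.1 ∧ 0 < p.2}) Filter.atTop ∧
    ∃ c : ℝ, 0 < c ∧ ∀ x y : ℝ, 0 < x → 0 < y →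
      (exp x - 1) * (exp y - 1) < 4 → c ≤ Kdb x y := by
  have hnum : ∀ x y : ℝ, 0 < x → 0 < y → 0 < 2 * exp (x + y) - 1 := by
    intro x y hx hy
    have : 1 < exp (x + y) := by simpa using Real.exp_lt_exp.mpr (by linarith)
    linarith
  refine ⟨fun x y hx hy => div_pos (hnum x y hx hy) (Kdb_den_pos hx hy), ?_, ?_⟩
  · -- tendsto atTop
    have hDcont : Continuous fun p : ℝ × ℝ =>
        4 * exp (p.1 + p.2) - 3 * exp p.1 - 3 * exp p.2 + 2 := by continuity
    have hNcont : Continuous fun p : ℝ × ℝ => 2 * exp (p.1 + p.2) - 1 := by continuity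
    have hD : Filter.Tendsto (fun p : ℝ × ℝ =>
        4 * exp (p.1 + p.2) - 3 * exp p.1 - 3 * exp p.2 + 2)
        (nhdsWithin (0, 0) {p : ℝ × ℝ | 0 < p.1 ∧ 0 < p.2}) (nhdsWithin 0 (Set.Ioi 0)) := by
      rw [tendsto_nhdsWithin_iff]
      constructor
      · have := (hDcont.tendsto ((0 : ℝ), (0 : ℝ))).mono_left (nhdsWithin_le_nhds (s := {p : ℝ × ℝ | 0 < p.1 ∧ 0 < p.2}))
        norm_num at this; convert this using 2 <;> norm_num
      · filter_upwards [self_mem_nhdsWithin] with p hp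
        exact Kdb_den_pos hp.1 hp.2
    have hinv := hD.inv_tendsto_nhdsGT_zero
    have hN : Filter.Tendsto (fun p : ℝ × ℝ => 2 * exp (p.1 + p.2) - 1)
        (nhdsWithin (0, 0) {p : ℝ × ℝ | 0 < p.1 ∧ 0 < p.2}) (nhds 1) := by
      have := (hNcont.tendsto ((0 : ℝ), (0 : ℝ))).mono_left (nhdsWithin_le_nhds (s := {p : ℝ × ℝ | 0 < p.1 ∧ 0 < p.2}))
      norm_num at this; convert this using 2 <;> norm_num
    have := Filter.Tendsto.pos_mul_atTop one_pos hN hinv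
    refine this.congr fun p => ?_
    simp [Kdb, div_eq_mul_inv]
  · refine ⟨1/2, by norm_num, fun x y hx hy _ => ?_⟩
    have hD := Kdb_den_pos hx hy
    rw [Kdb, le_div_iff₀ hD]
    have h1 : 1 < exp x := by simpa using Real.exp_lt_exp.mpr hx
    have h2 : 1 < exp y := by simpa using Real.exp_lt_exp.mpr hy
    linarith
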